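/- arXiv:2411.06746 — 6 statements merged into one kernel-verified Lean document; each statement's English description precedes it below -/
import Mathlib

section
/- For every deterministic learning algorithm A mapping labeled samples of size m from a finite domain X to predictors h : X → {0,1}, if m < |X|/2 then there exist a function f : X → {0,1} and a probability distribution D over X × {0,1} such that L_D(f) = 0 and, with probability at least 1/7 over the draw of an i.i.d. sample S ~ D^m, the predictor A(S) satisfies L_D(A(S)) ≥ 1/8. -/
/-!
Use distributions that are uniform on `X` with labels given by some `f : X → Bool`, and average
over all labellings `f`. A point `c` outside the sample is misclassified by `A S` for exactly half
of the labellings, since flipping `f c` changes neither the sample nor `A`'s prediction at `c`; at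
least `|X| - m ≥ |X| / 2` points lie outside the sample, so for some `f` the expected risk of
`A S` is at least `1/4`. The risk is at most `1`, so the reverse Markov inequality
`E[r] ≤ a + (1 - a) P[r ≥ a]` with `a = 1/8` gives
`P[risk ≥ 1/8] ≥ (1/4 - 1/8) / (7/8) = 1/7`.
-/

open Finset

namespace NoFreeLunch

lemma sum_mul_le_add_mul_sum_mul_ite_le {ι : Type*} [Fintype ι] {w r : ι → ℝ}
    (hw : ∀ i, 0 ≤ w i) (hw_sum : ∑ i, w i = 1) (hr : ∀ i, r i ≤ 1) (a : ℝ) :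
    ∑ i, w i * r i ≤ a + (1 - a) * ∑ i, w i * if a ≤ r i then 1 else 0 := by
  have hpoint (i : ι) : w i * r i ≤ a * w i + (1 - a) * (w i * if a ≤ r i then 1 else 0) := by
    split_ifs
    · nlinarith [hw i, hr i]
    · nlinarith [hw i]
  calc ∑ i, w i * r i
      ≤ ∑ i, (a * w i + (1 - a) * (w i * if a ≤ r i then 1 else 0)) :=
        sum_le_sum fun i _ => hpoint i
    _ = a + (1 - a) * ∑ i, w i * if a ≤ r i then 1 else 0 := by
      rw [sum_add_distrib, ← mul_sum, ← mul_sum, hw_sum, mul_one]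

variable {X : Type*}

noncomputable def labelledBy (μ : X → ℝ) (f : X → Bool) (p : X × Bool) : ℝ :=
  if p.2 = f p.1 then μ p.1 else 0

lemma labelledBy_nonneg {μ : X → ℝ} (hμ : ∀ x, 0 ≤ μ x) (f : X → Bool) (p : X × Bool) :
    0 ≤ labelledBy μ f p := by
  unfold labelledBy
  split_ifs
  exacts [hμ _, le_rfl]

variable [Fintype X]

noncomputable def risk (D : X × Bool → ℝ) (h : X → Bool) : ℝ :=
  ∑ p, D p * if h p.1 ≠ p.2 then 1 else 0

lemma risk_le_sum {D : X × Bool → ℝ} (hD : ∀ p, 0 ≤ D p) (h : X → Bool) :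
    risk D h ≤ ∑ p, D p :=
  sum_le_sum fun p _ => mul_le_of_le_one_right (hD p) (by split_ifs <;> norm_num)

lemma sum_labelledBy (μ : X → ℝ) (f : X → Bool) : ∑ p, labelledBy μ f p = ∑ x, μ x := by
  rw [Fintype.sum_prod_type]
  refine sum_congr rfl fun x _ => ?_
  cases f x <;> simp [labelledBy]

lemma risk_labelledBy (μ : X → ℝ) (f h : X → Bool) :
    risk (labelledBy μ f) h = ∑ x, μ x * if h x ≠ f x then 1 else 0 := by
  rw [risk, Fintype.sum_prod_type]
  refine sum_congr rfl fun x _ => ?_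
  cases hf : f x <;> cases hh : h x <;> simp [labelledBy, hf, hh]

lemma risk_labelledBy_self (μ : X → ℝ) (f : X → Bool) : risk (labelledBy μ f) f = 0 := by
  simp [risk_labelledBy]

lemma sum_prod_labelledBy_mul {m : ℕ} (μ : X → ℝ) (f : X → Bool)
    (g : (Fin m → X × Bool) → ℝ) :
    ∑ S : Fin m → X × Bool, (∏ i, labelledBy μ f (S i)) * g S =
      ∑ x : Fin m → X, (∏ i, μ (x i)) * g fun i => (x i, f (x i)) := by
  rw [← (Equiv.arrowProdEquivProdArrow _ _ _).symm.sum_comp, Fintype.sum_prod_type]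
  refine sum_congr rfl fun x _ => ?_
  rw [Fintype.sum_eq_single (fun i => f (x i))]
  · simp [labelledBy, Equiv.arrowProdEquivProdArrow]
  · intro b hb
    obtain ⟨i, hi⟩ := Function.ne_iff.1 hb
    rw [prod_eq_zero (mem_univ i) (by simp [labelledBy, hi]), zero_mul]

lemma sum_prod_eq_one {m : ℕ} {D : X × Bool → ℝ} (hD : ∑ p, D p = 1) :
    ∑ S : Fin m → X × Bool, ∏ i, D (S i) = 1 := by
  rw [← Fintype.prod_sum fun _ => D, hD, prod_const_one]

lemma sum_ite_ne_apply_eq_half [DecidableEq X] (Φ : (X → Bool) → Bool) (c : X)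
    (hΦ : ∀ f b, Φ (Function.update f c b) = Φ f) :
    ∑ f : X → Bool, (if Φ f ≠ f c then 1 else 0 : ℝ) = Fintype.card (X → Bool) / 2 := by
  set miss : (X → Bool) → ℝ := fun f => if Φ f ≠ f c then 1 else 0
  set flip : (X → Bool) → X → Bool := fun f => Function.update f c !(f c)
  have hflip : Function.Involutive flip := fun f => by simp [flip]
  have hpair (f : X → Bool) : miss f + miss (flip f) = 1 := by
    simp only [miss, flip, hΦ, Function.update_self]
    cases Φ f <;> cases f c <;> norm_num
  have htotal : ∑ f, miss f + ∑ f, miss (flip f) = Fintype.card (X → Bool) := by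
    simp [← sum_add_distrib, hpair]
  have hcomp : ∑ f, miss (flip f) = ∑ f, miss f := Equiv.sum_comp hflip.toPerm miss
  linarith

lemma card_sub_mul_le_sum_sum_ite_ne [DecidableEq X] {m : ℕ}
    (A : (Fin m → X × Bool) → X → Bool) (x : Fin m → X) :
    ((Fintype.card X : ℝ) - m) * (Fintype.card (X → Bool) / 2) ≤
      ∑ f : X → Bool, ∑ c, if A (fun i => (x i, f (x i))) c ≠ f c then 1 else 0 := by
  set unseen := (univ.image x)ᶜ
  have hunseen : (Fintype.card X : ℝ) - m ≤ unseen.card := by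
    have himage : (univ.image x).card ≤ m := card_image_le.trans (by simp)
    have : Fintype.card X ≤ unseen.card + m := by rw [card_compl]; omega
    rw [sub_le_iff_le_add]
    exact_mod_cast this
  have hhalf (c : X) (hc : c ∈ unseen) :
      ∑ f : X → Bool, (if A (fun i => (x i, f (x i))) c ≠ f c then 1 else 0 : ℝ) =
        Fintype.card (X → Bool) / 2 := by
    refine sum_ite_ne_apply_eq_half _ c fun f b => ?_
    have hxc (i : Fin m) : x i ≠ c := fun h =>
      mem_compl.1 hc (h ▸ mem_image_of_mem x (mem_univ i))
    simp only [Function.update_of_ne (hxc _)]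
  rw [sum_comm]
  calc ((Fintype.card X : ℝ) - m) * (Fintype.card (X → Bool) / 2)
      ≤ unseen.card * (Fintype.card (X → Bool) / 2) := by gcongr
    _ = ∑ c ∈ unseen, ∑ f : X → Bool, if A (fun i => (x i, f (x i))) c ≠ f c then 1 else 0 := by
      rw [sum_congr rfl hhalf, sum_const, nsmul_eq_mul]
    _ ≤ ∑ c, ∑ f : X → Bool, if A (fun i => (x i, f (x i))) c ≠ f c then 1 else 0 :=
      sum_le_sum_of_subset_of_nonneg (subset_univ _) fun c _ _ =>
        sum_nonneg fun f _ => by split_ifs <;> norm_num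

variable (X) in
noncomputable def uniformWeight : X → ℝ := fun _ => (Fintype.card X : ℝ)⁻¹

lemma sum_uniformWeight [Nonempty X] : ∑ x, uniformWeight X x = 1 := by
  simp [uniformWeight]

lemma exists_quarter_le_expected_risk [Nonempty X] {m : ℕ} (A : (Fin m → X × Bool) → X → Bool)
    (hmX : 2 * m ≤ Fintype.card X) :
    ∃ f : X → Bool, 1 / 4 ≤ ∑ S : Fin m → X × Bool,
      (∏ i, labelledBy (uniformWeight X) f (S i)) *
        risk (labelledBy (uniformWeight X) f) (A S) := by
  classical
  set n : ℝ := (Fintype.card X : ℝ)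
  set K : ℝ := (Fintype.card (X → Bool) : ℝ)
  have hn : 0 < n := by simp [n, Fintype.card_pos]
  have hexpected (f : X → Bool) :
      ∑ S : Fin m → X × Bool,
        (∏ i, labelledBy (uniformWeight X) f (S i)) * risk (labelledBy (uniformWeight X) f) (A S) =
      n⁻¹ ^ (m + 1) * ∑ x : Fin m → X, ∑ c,
        if A (fun i => (x i, f (x i))) c ≠ f c then 1 else 0 := by
    simp only [sum_prod_labelledBy_mul, risk_labelledBy, uniformWeight, prod_const, card_univ,
      Fintype.card_fin, ← mul_sum, pow_succ, mul_assoc, n]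
  have htotal : K * (1 / 4) ≤ ∑ f : X → Bool, n⁻¹ ^ (m + 1) * ∑ x : Fin m → X, ∑ c,
      if A (fun i => (x i, f (x i))) c ≠ f c then 1 else 0 := by
    rw [← mul_sum, sum_comm]
    calc K * (1 / 4) ≤ n⁻¹ * ((n - m) * (K / 2)) := by
          rw [inv_mul_eq_div, le_div_iff₀ hn]
          have : (2 * m : ℝ) ≤ n := by simp only [n]; exact_mod_cast hmX
          nlinarith [show (0 : ℝ) ≤ K by positivity]
      _ = n⁻¹ ^ (m + 1) * (n ^ m * ((n - m) * (K / 2))) := by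
        rw [pow_succ', mul_assoc, ← mul_assoc (n⁻¹ ^ m), ← mul_pow, inv_mul_cancel₀ hn.ne', one_pow,
          one_mul]
      _ = n⁻¹ ^ (m + 1) * ∑ _x : Fin m → X, (n - m) * (K / 2) := by
        simp [n]
      _ ≤ _ := by
        gcongr with x
        exact card_sub_mul_le_sum_sum_ite_ne A x
  simp only [← hexpected] at htotal
  rw [← nsmul_eq_mul, ← card_univ, ← sum_const] at htotal
  obtain ⟨f, -, hf⟩ := exists_le_of_sum_le univ_nonempty htotal
  exact ⟨f, hf⟩

end NoFreeLunch

open NoFreeLunch in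
theorem no_free_lunch_general
    (X : Type) [Fintype X]
    (m : ℕ) (hmX : 2 * m < Fintype.card X)
    (A : (Fin m → X × Bool) → X → Bool) :
    ∃ (D : X × Bool → ℝ) (f : X → Bool),
      (∀ p, 0 ≤ D p) ∧ (∑ p : X × Bool, D p) = 1 ∧
      -- the 0-1 risk of `f` under `D` is zero
      (∑ p : X × Bool, D p * (if f p.1 ≠ p.2 then 1 else 0)) = 0 ∧
      -- with probability at least 1/7 over `S ~ D^m`, the risk of `A S` is at least 1/8
      (1 / 7 : ℝ) ≤
        ∑ S : Fin m → X × Bool,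
          (∏ i, D (S i)) *
            (if (1 / 8 : ℝ) ≤
                ∑ p : X × Bool, D p * (if A S p.1 ≠ p.2 then 1 else 0)
             then 1 else 0) := by
  have : Nonempty X := Fintype.card_pos_iff.1 (by omega)
  obtain ⟨f, hf⟩ := exists_quarter_le_expected_risk A hmX.le
  set D := labelledBy (uniformWeight X) f
  have hD : ∀ p, 0 ≤ D p := labelledBy_nonneg (fun _ => inv_nonneg.2 (Nat.cast_nonneg _)) f
  have hD_sum : ∑ p, D p = 1 := by rw [sum_labelledBy, sum_uniformWeight]
  refine ⟨D, f, hD, hD_sum, risk_labelledBy_self _ f, ?_⟩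
  have hmarkov := sum_mul_le_add_mul_sum_mul_ite_le (fun S => prod_nonneg fun i _ => hD (S i))
    (sum_prod_eq_one hD_sum) (fun S => (risk_le_sum hD (A S)).trans hD_sum.le) (1 / 8)
  unfold risk at hf hmarkov
  linarith

/-- **No-Free-Lunch theorem.** For every deterministic learning algorithm `A` mapping labeled
samples of size `m` from a finite domain `X` to predictors `h : X → Bool`, if `m < |X|/2`
then there exist a function `f : X → Bool` and a probability distribution `D` over
`X × Bool` such that `L_D(f) = 0` and, with probability at least `1/7` over the draw of an
i.i.d. sample `S ~ D^m`, the predictor `A S` satisfies `L_D(A S) ≥ 1/8`. -/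
theorem no_free_lunch
    (X : Type) [Fintype X] [DecidableEq X]
    (m : ℕ) (hm : 0 < m) (hmX : 2 * m < Fintype.card X)
    (A : (Fin m → X × Bool) → X → Bool) :
    ∃ (D : X × Bool → ℝ) (f : X → Bool),
      (∀ p, 0 ≤ D p) ∧ (∑ p : X × Bool, D p) = 1 ∧
      -- the 0-1 risk of `f` under `D` is zero
      (∑ p : X × Bool, D p * (if f p.1 ≠ p.2 then 1 else 0)) = 0 ∧
      -- with probability at least 1/7 over `S ~ D^m`, the risk of `A S` is at least 1/8
      (1 / 7 : ℝ) ≤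
        ∑ S : Fin m → X × Bool,
          (∏ i, D (S i)) *
            (if (1 / 8 : ℝ) ≤
                ∑ p : X × Bool, D p * (if A S p.1 ≠ p.2 then 1 else 0)
             then 1 else 0) :=
  no_free_lunch_general X m hmX A
end

section
/- Let C be a finite set with |C| = 2m and let A be any deterministic learning algorithm mapping labeled samples of size m from C to predictors h : C → {0,1}. Then max over all functions f : C → {0,1} of the expectation E_{S ~ D_f^m}[L_{D_f}(A(S))] is at least 1/4, where D_f is the uniform distribution over the graph {(x, f(x)) : x ∈ C}. -/
/-! If a point `c` is not among the sample points, flipping `f` at `c` leaves the labelled sample,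
hence the prediction `A S c`, unchanged while flipping the true label; so `A` errs at `c` for
exactly half of all targets `f`. Every sample of size `m` misses at least `|C| - m = m` points, so
the error count averaged over `f` is at least `m / 2` out of `2m`, and some `f` is at least the
average. -/

open Finset Function

section
variable {α ι : Type*} [Fintype α] [DecidableEq α]

theorem two_mul_card_ne_apply_eq_two_pow (x : α) (P : (α → Bool) → Bool)
    (hP : ∀ f b, P (update f x b) = P f) :
    2 * #{f | P f ≠ f x} = 2 ^ Fintype.card α := by
  set flipAt : (α → Bool) → (α → Bool) := fun f => update f x (!f x)
  have hinv : Involutive flipAt := fun f => by simp [flipAt]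
  have hflipAt : #{f | P f ≠ f x} = #{f | ¬P f ≠ f x} := by
    refine card_nbij' flipAt flipAt ?_ ?_ (fun f _ => hinv f) (fun f _ => hinv f) <;>
      intro f <;> simp [flipAt, hP, Bool.eq_not]
  rw [two_mul]
  nth_rewrite 2 [hflipAt]
  rw [card_filter_add_card_filter_not, card_univ, Fintype.card_fun, Fintype.card_bool]

theorem card_sub_card_le_card_compl_image [Fintype ι] (xs : ι → α) :
    Fintype.card α - Fintype.card ι ≤ #(univ.image xs)ᶜ := by
  rw [card_compl]
  have := card_image_le (s := univ) (f := xs)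
  rw [card_univ] at this
  omega

def errorSet (A : (ι → α × Bool) → α → Bool) (xs : ι → α) (f : α → Bool) : Finset α :=
  {c | A (fun i => (xs i, f (xs i))) c ≠ f c}

theorem two_pow_mul_le_two_mul_sum_card_errorSet [Fintype ι] (A : (ι → α × Bool) → α → Bool)
    (xs : ι → α) :
    2 ^ Fintype.card α * (Fintype.card α - Fintype.card ι) ≤
      2 * ∑ f, #(errorSet A xs f) := by
  have swap : ∑ f, #(errorSet A xs f) = ∑ c, #{f | c ∈ errorSet A xs f} := by
    simp only [errorSet, mem_filter, mem_univ, true_and, card_filter]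
    exact sum_comm
  have unseen : ∀ c ∈ (univ.image xs)ᶜ,
      2 * #{f | c ∈ errorSet A xs f} = 2 ^ Fintype.card α := by
    intro c hc
    simp only [errorSet, mem_filter, mem_univ, true_and]
    refine two_mul_card_ne_apply_eq_two_pow c _ fun f b => ?_
    have hxs : ∀ i, xs i ≠ c := fun i h => by simp [← h] at hc
    simp only [update_of_ne (hxs _)]
  calc 2 ^ Fintype.card α * (Fintype.card α - Fintype.card ι)
      ≤ 2 ^ Fintype.card α * #(univ.image xs)ᶜ :=
        Nat.mul_le_mul_left _ (card_sub_card_le_card_compl_image xs)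
    _ = ∑ c ∈ (univ.image xs)ᶜ, 2 * #{f | c ∈ errorSet A xs f} := by
        rw [sum_congr rfl unseen, sum_const, smul_eq_mul, mul_comm]
    _ ≤ ∑ c, 2 * #{f | c ∈ errorSet A xs f} :=
        sum_le_sum_of_subset (subset_univ _)
    _ = 2 * ∑ f, #(errorSet A xs f) := by rw [swap, mul_sum]

/-- `E_{S ~ D_f^m} [L_{D_f} (A S)]`; a sample from `D_f^m` is a uniform tuple labelled by `f`. -/
noncomputable def expectedRisk [Fintype ι] [DecidableEq ι] (A : (ι → α × Bool) → α → Bool)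
    (f : α → Bool) : ℝ :=
  (∑ xs : ι → α, (#(errorSet A xs f) : ℝ) / Fintype.card α) /
    (Fintype.card α : ℝ) ^ Fintype.card ι

theorem le_sum_expectedRisk [Fintype ι] [DecidableEq ι] (A : (ι → α × Bool) → α → Bool)
    (hα : 0 < Fintype.card α) :
    2 ^ Fintype.card α * ((Fintype.card α - Fintype.card ι : ℕ) : ℝ) / (2 * Fintype.card α) ≤
      ∑ f, expectedRisk A f := by
  set n := Fintype.card α
  set k := Fintype.card ι
  have total : 2 ^ n * n ^ k * (n - k) ≤ 2 * ∑ f, ∑ xs : ι → α, #(errorSet A xs f) := by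
    calc 2 ^ n * n ^ k * (n - k) = ∑ _xs : ι → α, 2 ^ n * (n - k) := by
          rw [sum_const, card_univ, Fintype.card_fun, smul_eq_mul]; ring
      _ ≤ ∑ xs : ι → α, 2 * ∑ f, #(errorSet A xs f) :=
          sum_le_sum fun xs _ => two_pow_mul_le_two_mul_sum_card_errorSet A xs
      _ = 2 * ∑ f, ∑ xs : ι → α, #(errorSet A xs f) := by rw [← mul_sum, sum_comm]
  have sum_eq : ∑ f, expectedRisk A f =
      (∑ f, ∑ xs : ι → α, (#(errorSet A xs f) : ℝ)) / (n * n ^ k) := by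
    simp only [expectedRisk, ← sum_div, div_div]
    rfl
  have hn : (0 : ℝ) < n := by exact_mod_cast hα
  rw [sum_eq, div_le_div_iff₀ (by positivity) (by positivity)]
  calc (2 ^ n * ((n - k : ℕ) : ℝ)) * (n * n ^ k) = (2 ^ n * n ^ k * (n - k : ℕ) : ℕ) * n := by
        push_cast; ring
    _ ≤ (2 * ∑ f, ∑ xs : ι → α, #(errorSet A xs f) : ℕ) * n := by gcongr
    _ = _ := by push_cast; ring
end

theorem no_free_lunch_expectation_general
    (C : Type) [Fintype C]
    (m : ℕ) (hm : 0 < m) (hC : Fintype.card C = 2 * m)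
    (A : (Fin m → C × Bool) → C → Bool) :
    ∃ f : C → Bool,
      (1 / 4 : ℝ) ≤
        (∑ xs : Fin m → C,
            ((Finset.univ.filter
                (fun c : C => A (fun i => (xs i, f (xs i))) c ≠ f c)).card : ℝ) /
              (Fintype.card C : ℝ)) / (Fintype.card C : ℝ) ^ m := by
  classical
  have average : ∑ _f : C → Bool, (1 / 4 : ℝ) ≤ ∑ f, expectedRisk A f := by
    refine le_trans (le_of_eq ?_) (le_sum_expectedRisk A (by omega))
    rw [sum_const, card_univ, Fintype.card_fun, Fintype.card_bool, Fintype.card_fin, hC,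
      show 2 * m - m = m by omega, nsmul_eq_mul]
    push_cast
    field_simp
    ring
  obtain ⟨f, -, hf⟩ := exists_le_of_sum_le univ_nonempty average
  exact ⟨f, by simpa only [expectedRisk, errorSet, Fintype.card_fin] using hf⟩

/-- Let `C` be a finite set with `|C| = 2m` and let `A` be any deterministic learning algorithm
mapping labeled samples of size `m` from `C` to predictors `h : C → Bool`. Then the maximum over
all functions `f : C → Bool` of `E_{S ~ D_f^m}[L_{D_f}(A S)]` is at least `1/4`, where `D_f` is
the uniform distribution over the graph `{(x, f x) : x ∈ C}`: equivalently, some `f` attains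
expected risk at least `1/4`.  Since `D_f` draws each coordinate uniformly from `C` and labels it
by `f`, the expectation over `S ~ D_f^m` is the average over all tuples `xs ∈ C^m` of
`L_{D_f}(A ((xs i, f (xs i))_i))`, and `L_{D_f}(h) = |{x : h x ≠ f x}| / |C|`. -/
theorem no_free_lunch_expectation
    (C : Type) [Fintype C] [DecidableEq C]
    (m : ℕ) (hm : 0 < m) (hC : Fintype.card C = 2 * m)
    (A : (Fin m → C × Bool) → C → Bool) :
    ∃ f : C → Bool,
      (1 / 4 : ℝ) ≤
        (∑ xs : Fin m → C,
            ((Finset.univ.filter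
                (fun c : C => A (fun i => (xs i, f (xs i))) c ≠ f c)).card : ℝ) /
              (Fintype.card C : ℝ)) / (Fintype.card C : ℝ) ^ m :=
  no_free_lunch_expectation_general C m hm hC A
end

section
/- Let C be a finite set with |C| = 2m, A : (C × {0,1})^m → ({0,1}^C) any function, and (x_1, …, x_m) ∈ C^m a fixed sequence of points of C. Then the average over all 2^{|C|} functions f : C → {0,1} of L_{D_f}(A((x_1, f(x_1)), …, (x_m, f(x_m)))) is at least 1/4, where L_{D_f}(h) = (1/|C|) · |{x ∈ C : h(x) ≠ f(x)}|. -/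
/-!
Flipping the label of a point `c` that the sample never visits leaves the sample, hence the
learner's prediction at `c`, unchanged, while it toggles whether that prediction is wrong. So for
each such `c` exactly half of the `2 ^ |C|` labelings are misclassified at `c`. At least
`|C| - m = m` points are unvisited, so the total number of errors over all labelings is at least
`m * 2 ^ |C| / 2`, i.e. the average risk is at least `(m / 2) / (2 * m) = 1 / 4`.
-/

open Finset Function

theorem two_mul_card_filter_ne_apply_eq_two_pow {α : Type*} [Fintype α] [DecidableEq α]
    (c : α) (h : (α → Bool) → Bool) (h_update : ∀ f b, h (update f c b) = h f) :
    2 * #{f : α → Bool | h f ≠ f c} = 2 ^ Fintype.card α := by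
  set toggle : (α → Bool) → α → Bool := fun f => update f c (!f c)
  have toggle_toggle (f : α → Bool) : toggle (toggle f) = f := by simp [toggle]
  have eq_toggle_iff (f : α → Bool) : h (toggle f) = toggle f c ↔ h f ≠ f c := by
    simp only [toggle, h_update, update_self]
    cases h f <;> cases f c <;> simp
  have card_eq : #{f : α → Bool | h f ≠ f c} = #{f : α → Bool | ¬h f ≠ f c} :=
    card_nbij' toggle toggle (fun f hf => by simpa [eq_toggle_iff] using hf)
      (fun f hf => by simpa [eq_toggle_iff] using hf)
      (fun f _ => toggle_toggle f) (fun f _ => toggle_toggle f)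
  rw [two_mul]
  nth_rw 2 [card_eq]
  rw [card_filter_add_card_filter_not, card_univ, Fintype.card_fun, Fintype.card_bool]

theorem card_sub_mul_two_pow_le_two_mul_sum_card_errors {C : Type*} [Fintype C] [DecidableEq C]
    {m : ℕ} (A : (Fin m → C × Bool) → C → Bool) (x : Fin m → C) :
    (Fintype.card C - m) * 2 ^ Fintype.card C ≤
      2 * ∑ f : C → Bool, #{c | A (fun i => (x i, f (x i))) c ≠ f c} := by
  set unseen : Finset C := (univ.image x)ᶜ
  have card_unseen : Fintype.card C - m ≤ #unseen := by
    have := card_image_le (s := univ) (f := x)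
    rw [card_compl]
    simp only [card_univ, Fintype.card_fin] at this
    omega
  have half_wrong (c : C) (hc : c ∈ unseen) :
      2 * #{f : C → Bool | A (fun i => (x i, f (x i))) c ≠ f c} = 2 ^ Fintype.card C := by
    have hx (i : Fin m) : x i ≠ c := fun hi => by simp [unseen, ← hi] at hc
    refine two_mul_card_filter_ne_apply_eq_two_pow c _ fun f b => ?_
    simp [update_of_ne (hx _)]
  calc (Fintype.card C - m) * 2 ^ Fintype.card C
      ≤ #unseen * 2 ^ Fintype.card C := Nat.mul_le_mul_right _ card_unseen
    _ = ∑ c ∈ unseen, 2 * #{f : C → Bool | A (fun i => (x i, f (x i))) c ≠ f c} := by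
      rw [sum_congr rfl half_wrong, sum_const, smul_eq_mul]
    _ ≤ ∑ c, 2 * #{f : C → Bool | A (fun i => (x i, f (x i))) c ≠ f c} :=
      sum_le_sum_of_subset (subset_univ _)
    _ = 2 * ∑ f : C → Bool, #{c | A (fun i => (x i, f (x i))) c ≠ f c} := by
      simp only [← mul_sum, card_filter]
      rw [sum_comm]

/-- Let `C` be a finite set with `|C| = 2m`, `A : (C × Bool)^m → (C → Bool)` any function, and
`x : Fin m → C` a fixed sequence of points of `C`. Then the average over all `2^|C|` functions
`f : C → Bool` of `L_{D_f}(A ((x i, f (x i))_i))` is at least `1/4`, where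
`L_{D_f}(h) = |{c ∈ C : h c ≠ f c}| / |C|`. -/
theorem average_risk_over_labelings
    (C : Type) [Fintype C] [DecidableEq C]
    (m : ℕ) (hm : 0 < m) (hC : Fintype.card C = 2 * m)
    (A : (Fin m → C × Bool) → C → Bool) (x : Fin m → C) :
    (1 / 4 : ℝ) ≤
      (∑ f : C → Bool,
          ((Finset.univ.filter
              (fun c : C => A (fun i => (x i, f (x i))) c ≠ f c)).card : ℝ) /
            (Fintype.card C : ℝ)) / 2 ^ (Fintype.card C) := by
  have errors := card_sub_mul_two_pow_le_two_mul_sum_card_errors A x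
  rw [hC, show 2 * m - m = m by omega] at errors
  have errors_real : (m : ℝ) * 2 ^ (2 * m) ≤
      2 * ∑ f : C → Bool, (#{c | A (fun i => (x i, f (x i))) c ≠ f c} : ℝ) := by
    exact_mod_cast errors
  have m_pos : (0 : ℝ) < m := by exact_mod_cast hm
  rw [← sum_div, div_div, hC, le_div_iff₀ (by push_cast; positivity)]
  push_cast
  linarith
end

section
/- Let X ∈ ℝ^{n×m} be a matrix, S ⊆ {1,…,m}, and θ* ∈ ℝ^m a vector whose support is contained in S. If X satisfies the restricted null space property with respect to S, i.e., the only vector θ with Xθ = 0 and ‖θ_{S^c}‖₁ ≤ ‖θ_S‖₁ is θ = 0, then θ* is the unique minimizer of ‖θ‖₁ over the affine set {θ ∈ ℝ^m : Xθ = Xθ*}; that is, every θ̂ with Xθ̂ = Xθ* and ‖θ̂‖₁ ≤ ‖θ*‖₁ equals θ*. -/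
open Finset

theorem sum_compl_abs_sub_le_sum_abs_sub {ι α : Type*} [Fintype ι] [DecidableEq ι]
    [AddCommGroup α] [LinearOrder α] [IsOrderedAddMonoid α] {S : Finset ι} {θ θ' : ι → α}
    (hsupp : ∀ j ∉ S, θ' j = 0) (hle : ∑ j, |θ j| ≤ ∑ j, |θ' j|) :
    ∑ j ∈ Sᶜ, |θ j - θ' j| ≤ ∑ j ∈ S, |θ j - θ' j| := by
  have hθ'_compl : ∑ j ∈ Sᶜ, |θ' j| = 0 :=
    sum_eq_zero fun j hj => by simp [hsupp j (mem_compl.1 hj)]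
  rw [← sum_add_sum_compl S, ← sum_add_sum_compl S (fun j => |θ' j|), hθ'_compl,
    add_zero] at hle
  calc ∑ j ∈ Sᶜ, |θ j - θ' j| = ∑ j ∈ Sᶜ, |θ j| :=
        sum_congr rfl fun j hj => by simp [hsupp j (mem_compl.1 hj)]
    _ ≤ ∑ j ∈ S, |θ' j| - ∑ j ∈ S, |θ j| := le_sub_iff_add_le'.2 hle
    _ = ∑ j ∈ S, (|θ' j| - |θ j|) := (sum_sub_distrib _ _).symm
    _ ≤ ∑ j ∈ S, |θ j - θ' j| := sum_le_sum fun j _ =>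
        abs_sub_comm (θ j) (θ' j) ▸ abs_sub_abs_le_abs_sub (θ' j) (θ j)

/-- **Restricted null space property implies exact ℓ¹ recovery.** Let `X ∈ ℝ^{n×m}`,
`S ⊆ {1,…,m}`, and `θ* ∈ ℝ^m` a vector whose support is contained in `S`. If the only vector
`θ` with `Xθ = 0` and `‖θ_{Sᶜ}‖₁ ≤ ‖θ_S‖₁` is `θ = 0`, then every `θ̂` with `Xθ̂ = Xθ*` and
`‖θ̂‖₁ ≤ ‖θ*‖₁` equals `θ*`; i.e. `θ*` is the unique minimizer of `‖·‖₁` over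
`{θ : Xθ = Xθ*}`. -/
theorem restricted_null_space_recovery
    (n m : ℕ) (X : Matrix (Fin n) (Fin m) ℝ) (S : Finset (Fin m))
    (θstar : Fin m → ℝ) (hsupp : ∀ j ∉ S, θstar j = 0)
    (hRNSP : ∀ θ : Fin m → ℝ, X.mulVec θ = 0 →
      (∑ j ∈ Sᶜ, |θ j|) ≤ (∑ j ∈ S, |θ j|) → θ = 0) :
    ∀ θhat : Fin m → ℝ, X.mulVec θhat = X.mulVec θstar →
      (∑ j, |θhat j|) ≤ (∑ j, |θstar j|) → θhat = θstar := by
  intro θhat hX hle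
  have hker : X.mulVec (θhat - θstar) = 0 := by rw [Matrix.mulVec_sub, hX, sub_self]
  exact sub_eq_zero.1 <| hRNSP _ hker <| sum_compl_abs_sub_le_sum_abs_sub hsupp hle
end

section
/- Let F, H : ℝ^d → ℝ be twice continuously differentiable functions such that F has gradients bounded by G (‖∇F(θ)‖ ≤ G for all θ), ∇F is ς-Lipschitz, ∇²H is ρ-Lipschitz in operator norm, and σ I ⪯ ∇²H(θ) ⪯ ς I for all θ with 0 < σ ≤ ς. Define Q(θ) = θ − β∇H(θ) and G̃ = F ∘ Q. Then for any 0 < β ≤ 1/ς and all θ₁, θ₂ ∈ ℝ^d, ‖∇G̃(θ₁) − ∇G̃(θ₂)‖ ≤ (βρG + (1 − βσ)² ς)·‖θ₁ − θ₂‖. -/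
/-!
By the chain rule, `∇G̃(θ) = Q'(θ)* ∇F(Q(θ))` with `Q'(θ) = I - β∇²H(θ)`, and `Q'(θ)` is self-adjoint
by the symmetry of second derivatives. Its quadratic form lies between `(1 - βς)‖v‖²` and
`(1 - βσ)‖v‖²`, and `1 - βς ≥ 0`, so `‖Q'(θ)‖ ≤ 1 - βσ`; by the mean value inequality `Q` is then
`(1 - βσ)`-Lipschitz. Finally
`Q'(θ₁) g₁ - Q'(θ₂) g₂ = (Q'(θ₁) - Q'(θ₂)) g₁ + Q'(θ₂) (g₁ - g₂)` with `gᵢ = ∇F(Q(θᵢ))`, where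
`‖Q'(θ₁) - Q'(θ₂)‖ ≤ βρ‖θ₁ - θ₂‖`, `‖g₁‖ ≤ G` and `‖g₁ - g₂‖ ≤ ς(1 - βσ)‖θ₁ - θ₂‖`.
-/

open scoped RealInnerProductSpace Gradient
open InnerProductSpace ContinuousLinearMap

namespace ContinuousLinearMap

theorem norm_apply_sub_apply_le {𝕜 E F : Type*} [NontriviallyNormedField 𝕜]
    [SeminormedAddCommGroup E] [NormedSpace 𝕜 E] [SeminormedAddCommGroup F] [NormedSpace 𝕜 F]
    (M₁ M₂ : E →L[𝕜] F) (x₁ x₂ : E) :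
    ‖M₁ x₁ - M₂ x₂‖ ≤ ‖M₁ - M₂‖ * ‖x₁‖ + ‖M₂‖ * ‖x₁ - x₂‖ :=
  calc ‖M₁ x₁ - M₂ x₂‖ = ‖(M₁ - M₂) x₁ + M₂ (x₁ - x₂)‖ := by simp
    _ ≤ ‖(M₁ - M₂) x₁‖ + ‖M₂ (x₁ - x₂)‖ := norm_add_le _ _
    _ ≤ ‖M₁ - M₂‖ * ‖x₁‖ + ‖M₂‖ * ‖x₁ - x₂‖ := add_le_add (le_opNorm _ _) (le_opNorm _ _)

theorem opNorm_le_of_isSymmetric_of_abs_re_inner_le {𝕜 E : Type*} [RCLike 𝕜]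
    [NormedAddCommGroup E] [InnerProductSpace 𝕜 E] {T : E →L[𝕜] E}
    (hT : (T : E →ₗ[𝕜] E).IsSymmetric) {c : ℝ} (hc : 0 ≤ c)
    (h : ∀ x, |RCLike.re (inner 𝕜 (T x) x)| ≤ c * ‖x‖ ^ 2) : ‖T‖ ≤ c := by
  rw [T.norm_eq_iSup_rayleighQuotient hT]
  refine ciSup_le fun x => ?_
  rcases eq_or_ne x 0 with rfl | hx
  · simpa using hc
  · rw [rayleighQuotient, reApplyInnerSelf_apply, abs_div, abs_sq, div_le_iff₀ (by positivity)]
    exact h x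

end ContinuousLinearMap

variable {E : Type*} [NormedAddCommGroup E] [InnerProductSpace ℝ E]

theorem isSymmetric_id_sub_smul {A : E →L[ℝ] E} (hA : (A : E →ₗ[ℝ] E).IsSymmetric) (β : ℝ) :
    ((ContinuousLinearMap.id ℝ E - β • A : E →L[ℝ] E) : E →ₗ[ℝ] E).IsSymmetric := by
  simpa using LinearMap.IsSymmetric.id.sub (hA.smul (conj_trivial β))

theorem norm_id_sub_smul_le_of_isSymmetric {A : E →L[ℝ] E} (hA : (A : E →ₗ[ℝ] E).IsSymmetric)
    {σ ς β : ℝ} (hAσ : ∀ v, σ * ‖v‖ ^ 2 ≤ ⟪v, A v⟫) (hAς : ∀ v, ⟪v, A v⟫ ≤ ς * ‖v‖ ^ 2)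
    (hσς : σ ≤ ς) (hβ : 0 ≤ β) (hβς : β * ς ≤ 1) :
    ‖ContinuousLinearMap.id ℝ E - β • A‖ ≤ 1 - β * σ := by
  have hβσ : β * σ ≤ β * ς := mul_le_mul_of_nonneg_left hσς hβ
  refine opNorm_le_of_isSymmetric_of_abs_re_inner_le (isSymmetric_id_sub_smul hA β)
    (by linarith) fun v => ?_
  have h₁ := hAσ v
  have h₂ := hAς v
  rw [real_inner_comm] at h₁ h₂
  simp only [sub_apply, id_apply, smul_apply, inner_sub_left, real_inner_smul_left,
    real_inner_self_eq_norm_sq, RCLike.re_to_real, abs_le]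
  constructor <;> nlinarith [sq_nonneg ‖v‖]

variable [CompleteSpace E]

theorem ContDiffAt.differentiableAt_gradient {f : E → ℝ} {x : E} (hf : ContDiffAt ℝ 2 f x) :
    DifferentiableAt ℝ (∇ f) x :=
  ((toDual ℝ E).symm.contDiff.contDiffAt.comp x (hf.fderiv_right le_rfl)).differentiableAt
    one_ne_zero

theorem inner_fderiv_gradient_apply (f : E → ℝ) (x u v : E) :
    ⟪fderiv ℝ (∇ f) x u, v⟫ = fderiv ℝ (fderiv ℝ f) x u v := by
  have hgrad : ∇ f = (toDual ℝ E).symm ∘ fderiv ℝ f := rfl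
  rw [hgrad, LinearIsometryEquiv.comp_fderiv]
  exact toDual_symm_apply

theorem ContDiffAt.isSymmetric_fderiv_gradient {f : E → ℝ} {x : E} (hf : ContDiffAt ℝ 2 f x) :
    (fderiv ℝ (∇ f) x : E →ₗ[ℝ] E).IsSymmetric := fun u v => by
  rw [coe_coe, inner_fderiv_gradient_apply, real_inner_comm, inner_fderiv_gradient_apply]
  exact hf.isSymmSndFDerivAt (by simp) u v

theorem gradient_comp {F : Type*} [NormedAddCommGroup F] [InnerProductSpace ℝ F] [CompleteSpace F]
    {f : F → ℝ} {g : E → F} {x : E} (hf : DifferentiableAt ℝ f (g x))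
    (hg : DifferentiableAt ℝ g x) :
    ∇ (f ∘ g) x = adjoint (fderiv ℝ g x) (∇ f (g x)) :=
  ext_inner_right ℝ fun v => by
    rw [inner_gradient_left, fderiv_comp x hf hg, adjoint_inner_left, inner_gradient_left]
    rfl

/-- The map `Q` of the paper. -/
noncomputable def gradientStep (H : E → ℝ) (β : ℝ) (θ : E) : E := θ - β • ∇ H θ

section GradientStep

variable {H : E → ℝ} {σ ς β : ℝ}

theorem fderiv_gradientStep {x : E} (hH : DifferentiableAt ℝ (∇ H) x) :
    fderiv ℝ (gradientStep H β) x = ContinuousLinearMap.id ℝ E - β • fderiv ℝ (∇ H) x :=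
  ((hasFDerivAt_id x).sub (hH.hasFDerivAt.const_smul β)).fderiv

theorem ContDiffAt.differentiableAt_gradientStep {x : E} (hH : ContDiffAt ℝ 2 H x) :
    DifferentiableAt ℝ (gradientStep H β) x :=
  differentiableAt_id.sub (hH.differentiableAt_gradient.const_smul β)

theorem norm_fderiv_gradientStep_le {x : E} (hH : ContDiffAt ℝ 2 H x)
    (hHσ : ∀ v, σ * ‖v‖ ^ 2 ≤ ⟪v, fderiv ℝ (∇ H) x v⟫)
    (hHς : ∀ v, ⟪v, fderiv ℝ (∇ H) x v⟫ ≤ ς * ‖v‖ ^ 2)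
    (hσς : σ ≤ ς) (hβ : 0 ≤ β) (hβς : β * ς ≤ 1) :
    ‖fderiv ℝ (gradientStep H β) x‖ ≤ 1 - β * σ := by
  rw [fderiv_gradientStep hH.differentiableAt_gradient]
  exact norm_id_sub_smul_le_of_isSymmetric hH.isSymmetric_fderiv_gradient hHσ hHς hσς hβ hβς

theorem gradient_comp_gradientStep {F : E → ℝ} {x : E}
    (hF : DifferentiableAt ℝ F (gradientStep H β x)) (hH : ContDiffAt ℝ 2 H x) :
    ∇ (F ∘ gradientStep H β) x = fderiv ℝ (gradientStep H β) x (∇ F (gradientStep H β x)) := by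
  have hsymm : IsSelfAdjoint (fderiv ℝ (gradientStep H β) x) := by
    rw [fderiv_gradientStep hH.differentiableAt_gradient, isSelfAdjoint_iff_isSymmetric]
    exact isSymmetric_id_sub_smul hH.isSymmetric_fderiv_gradient β
  rw [gradient_comp hF hH.differentiableAt_gradientStep, hsymm.adjoint_eq]

theorem norm_gradientStep_sub_le (hH : ContDiff ℝ 2 H)
    (hHσ : ∀ x v, σ * ‖v‖ ^ 2 ≤ ⟪v, fderiv ℝ (∇ H) x v⟫)
    (hHς : ∀ x v, ⟪v, fderiv ℝ (∇ H) x v⟫ ≤ ς * ‖v‖ ^ 2)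
    (hσς : σ ≤ ς) (hβ : 0 ≤ β) (hβς : β * ς ≤ 1) (θ₁ θ₂ : E) :
    ‖gradientStep H β θ₁ - gradientStep H β θ₂‖ ≤ (1 - β * σ) * ‖θ₁ - θ₂‖ :=
  convex_univ.norm_image_sub_le_of_norm_fderiv_le
    (fun _ _ => hH.contDiffAt.differentiableAt_gradientStep)
    (fun x _ => norm_fderiv_gradientStep_le hH.contDiffAt (hHσ x) (hHς x) hσς hβ hβς)
    (Set.mem_univ θ₂) (Set.mem_univ θ₁)

theorem norm_gradient_comp_gradientStep_sub_le {F : E → ℝ} {G ρ : ℝ}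
    (hF : Differentiable ℝ F) (hH : ContDiff ℝ 2 H)
    (hG : ∀ θ, ‖∇ F θ‖ ≤ G)
    (hFlip : ∀ θ₁ θ₂, ‖∇ F θ₁ - ∇ F θ₂‖ ≤ ς * ‖θ₁ - θ₂‖)
    (hHlip : ∀ θ₁ θ₂, ‖fderiv ℝ (∇ H) θ₁ - fderiv ℝ (∇ H) θ₂‖ ≤ ρ * ‖θ₁ - θ₂‖)
    (hHσ : ∀ x v, σ * ‖v‖ ^ 2 ≤ ⟪v, fderiv ℝ (∇ H) x v⟫)
    (hHς : ∀ x v, ⟪v, fderiv ℝ (∇ H) x v⟫ ≤ ς * ‖v‖ ^ 2)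
    (hσς : σ ≤ ς) (hς : 0 ≤ ς) (hβ : 0 ≤ β) (hβς : β * ς ≤ 1) (θ₁ θ₂ : E) :
    ‖∇ (F ∘ gradientStep H β) θ₁ - ∇ (F ∘ gradientStep H β) θ₂‖
      ≤ (β * ρ * G + (1 - β * σ) ^ 2 * ς) * ‖θ₁ - θ₂‖ := by
  rw [gradient_comp_gradientStep (hF _) hH.contDiffAt,
    gradient_comp_gradientStep (hF _) hH.contDiffAt]
  have hM₁₂ : ‖fderiv ℝ (gradientStep H β) θ₁ - fderiv ℝ (gradientStep H β) θ₂‖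
      ≤ β * (ρ * ‖θ₁ - θ₂‖) := by
    rw [fderiv_gradientStep hH.contDiffAt.differentiableAt_gradient,
      fderiv_gradientStep hH.contDiffAt.differentiableAt_gradient, sub_sub_sub_cancel_left,
      ← smul_sub, norm_smul, Real.norm_of_nonneg hβ, norm_sub_rev]
    exact mul_le_mul_of_nonneg_left (hHlip θ₁ θ₂) hβ
  have hM₂ := norm_fderiv_gradientStep_le hH.contDiffAt (hHσ θ₂) (hHς θ₂) hσς hβ hβς
  have hgradF : ‖∇ F (gradientStep H β θ₁) - ∇ F (gradientStep H β θ₂)‖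
      ≤ ς * ((1 - β * σ) * ‖θ₁ - θ₂‖) :=
    (hFlip _ _).trans <| mul_le_mul_of_nonneg_left
      (norm_gradientStep_sub_le hH hHσ hHς hσς hβ hβς θ₁ θ₂) hς
  calc _ ≤ _ := norm_apply_sub_apply_le _ _ _ _
    _ ≤ β * (ρ * ‖θ₁ - θ₂‖) * G + (1 - β * σ) * (ς * ((1 - β * σ) * ‖θ₁ - θ₂‖)) := by
      gcongr
      · exact (norm_nonneg _).trans hM₁₂
      · exact hG _
      · exact (norm_nonneg _).trans hM₂
    _ = (β * ρ * G + (1 - β * σ) ^ 2 * ς) * ‖θ₁ - θ₂‖ := by ring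

end GradientStep

/-- **Smoothness of the meta-objective.** Let `F, H : ℝ^d → ℝ` be twice continuously
differentiable such that `F` has gradients bounded by `G`, `∇F` is `ς`-Lipschitz, `∇²H` is
`ρ`-Lipschitz in operator norm, and `σ I ⪯ ∇²H(θ) ⪯ ς I` for all `θ` with `0 < σ ≤ ς`. Define
`Q(θ) = θ − β∇H(θ)` and `G̃ = F ∘ Q`. Then for any `0 < β ≤ 1/ς` and all `θ₁, θ₂`,
`‖∇G̃(θ₁) − ∇G̃(θ₂)‖ ≤ (βρG + (1 − βσ)² ς)‖θ₁ − θ₂‖`. -/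
theorem meta_objective_smooth
    {d : ℕ} (F H : EuclideanSpace ℝ (Fin d) → ℝ) (G ρ σ ς β : ℝ)
    (hσ : 0 < σ) (hσς : σ ≤ ς)
    (hF : ContDiff ℝ 2 F) (hH : ContDiff ℝ 2 H)
    (hG : ∀ θ, ‖gradient F θ‖ ≤ G)
    (hFlip : ∀ θ₁ θ₂, ‖gradient F θ₁ - gradient F θ₂‖ ≤ ς * ‖θ₁ - θ₂‖)
    (hHlip : ∀ θ₁ θ₂ : EuclideanSpace ℝ (Fin d),
      ‖fderiv ℝ (gradient H) θ₁ - fderiv ℝ (gradient H) θ₂‖ ≤ ρ * ‖θ₁ - θ₂‖)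
    (hHhess : ∀ θ v : EuclideanSpace ℝ (Fin d),
      σ * ‖v‖ ^ 2 ≤ ⟪v, fderiv ℝ (gradient H) θ v⟫ ∧
        ⟪v, fderiv ℝ (gradient H) θ v⟫ ≤ ς * ‖v‖ ^ 2)
    (hβ0 : 0 < β) (hβ : β ≤ 1 / ς)
    (θ₁ θ₂ : EuclideanSpace ℝ (Fin d)) :
    ‖gradient (fun θ => F (θ - β • gradient H θ)) θ₁
        - gradient (fun θ => F (θ - β • gradient H θ)) θ₂‖
      ≤ (β * ρ * G + (1 - β * σ) ^ 2 * ς) * ‖θ₁ - θ₂‖ := by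
  have hς : 0 < ς := hσ.trans_le hσς
  exact norm_gradient_comp_gradientStep_sub_le (hF.differentiable two_ne_zero) hH hG hFlip hHlip
    (fun θ v => (hHhess θ v).1) (fun θ v => (hHhess θ v).2) hσς hς.le hβ0.le
    ((le_div_iff₀ hς).mp hβ) θ₁ θ₂
end

section
/- Let Z be a measurable space, D a probability measure on Z, n ≥ 1, H a measurable space of hypotheses, A : Z^n → H a measurable algorithm, and ℓ : H × Z → ℝ a bounded measurable loss. Suppose A is ξ-uniformly stable: for every pair of samples S, S' ∈ Z^n that differ in exactly one coordinate and every z ∈ Z, |ℓ(A(S), z) − ℓ(A(S'), z)| ≤ ξ. Then the expected generalization gap satisfies E_{S ~ D^n}[ L_D(A(S)) − L̂_S(A(S)) ] ≤ ξ, where L_D(h) = E_{z ~ D}[ℓ(h, z)] is the population loss and L̂_S(h) = (1/n)·Σ_{i=1}^n ℓ(h, z_i) is the empirical loss on the sample S = (z_1, …, z_n). -/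
/-!
Replacing the `i`-th sample point by a fresh draw `z ~ D` leaves the law of the sample unchanged,
so `E_S[ℓ(A S, S i)] = E_{S,z}[ℓ(A S⁽ⁱ⁾, z)]`, where `S⁽ⁱ⁾` is `S`
with its `i`-th point replaced by `z`; by Fubini also `E_S[L_D(A S)] = E_{S,z}[ℓ(A S, z)]`.
The expected gap is therefore the expectation of the average over `i` of
`ℓ(A S, z) - ℓ(A S⁽ⁱ⁾, z)`, and each of these terms is at most `ξ` by stability.
-/

open MeasureTheory

namespace MeasureTheory

variable {ι : Type*} [Fintype ι] [DecidableEq ι] {α : ι → Type*} [∀ j, MeasurableSpace (α j)]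
  (μ : ∀ j, Measure (α j)) [∀ j, SigmaFinite (μ j)] (i : ι) [IsProbabilityMeasure (μ i)]

theorem measurePreserving_update :
    MeasurePreserving (fun p : (∀ j, α j) × α i => Function.update p.1 i p.2)
      ((Measure.pi μ).prod (μ i)) (Measure.pi μ) := by
  refine ⟨measurable_update', (Measure.pi_eq fun s hs => ?_).symm⟩
  have hpre : (fun p : (∀ j, α j) × α i => Function.update p.1 i p.2) ⁻¹' Set.univ.pi s
      = Set.univ.pi (Function.update s i Set.univ) ×ˢ s i := by
    ext ⟨x, y⟩
    simp only [Set.mem_preimage, Set.mem_univ_pi, Set.mem_prod]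
    refine ⟨fun h => ⟨fun j => ?_, by simpa using h i⟩, fun ⟨hx, hy⟩ j => ?_⟩ <;>
      rcases eq_or_ne j i with rfl | hj
    · simp
    · simpa [hj] using h j
    · simpa using hy
    · simpa [hj] using hx j
  rw [Measure.map_apply measurable_update' (.univ_pi hs), hpre, Measure.prod_prod, Measure.pi_pi]
  simp only [Function.apply_update (fun j => μ j), measure_univ]
  rw [Finset.prod_update_of_mem (Finset.mem_univ i), one_mul,
    Finset.prod_eq_prod_sdiff_singleton_mul (Finset.mem_univ i)]

theorem integral_eval_eq_integral_update {E : Type*} [NormedAddCommGroup E] [NormedSpace ℝ E]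
    (f : (∀ j, α j) → α i → E) (hf : AEStronglyMeasurable (fun x => f x (x i)) (Measure.pi μ)) :
    ∫ x, f x (x i) ∂Measure.pi μ
      = ∫ p, f (Function.update p.1 i p.2) p.2 ∂(Measure.pi μ).prod (μ i) := by
  have hmp := measurePreserving_update μ i
  have h := integral_map hmp.measurable.aemeasurable (hmp.map_eq.symm ▸ hf)
  rw [hmp.map_eq] at h
  simpa using h

end MeasureTheory

theorem sub_mul_sum_le_of_forall_sub_le {ι : Type*} [Fintype ι] [Nonempty ι] {c ξ : ℝ} {a : ι → ℝ}
    (h : ∀ i, c - a i ≤ ξ) : c - (1 / (Fintype.card ι : ℝ)) * ∑ i, a i ≤ ξ := by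
  have hcard : (0 : ℝ) < Fintype.card ι := by exact_mod_cast Fintype.card_pos
  have hsum : (Fintype.card ι : ℝ) * (c - ξ) ≤ ∑ i, a i := by
    simpa using Finset.card_nsmul_le_sum Finset.univ a (c - ξ) fun i _ => by linarith [h i]
  rw [one_div, ← div_eq_inv_mul, sub_le_comm, le_div_iff₀ hcard]
  linarith

/-- **Uniform stability implies generalization in expectation.** Let `Z` be a measurable space,
`D` a probability measure on `Z`, `n ≥ 1`, `H` a measurable space of hypotheses,
`A : Z^n → H` a measurable algorithm, and `ℓ : H × Z → ℝ` a bounded measurable loss. If `A` is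
`ξ`-uniformly stable (replacing one coordinate of the sample changes the loss at any point by at
most `ξ`), then `E_{S ~ D^n}[L_D(A S) − L̂_S(A S)] ≤ ξ`, where `L_D(h) = E_{z ~ D}[ℓ(h, z)]`
and `L̂_S(h) = (1/n) Σ_i ℓ(h, S_i)`. -/
theorem uniform_stability_generalization
    {Z H : Type*} [MeasurableSpace Z] [MeasurableSpace H]
    (D : Measure Z) [IsProbabilityMeasure D]
    (n : ℕ) (hn : 1 ≤ n)
    (A : (Fin n → Z) → H) (hA : Measurable A)
    (ℓ : H × Z → ℝ) (hℓ : Measurable ℓ)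
    (B : ℝ) (hbdd : ∀ p, |ℓ p| ≤ B)
    (ξ : ℝ)
    (hstable : ∀ S S' : Fin n → Z,
      (∃ i : Fin n, ∀ j : Fin n, j ≠ i → S j = S' j) →
      ∀ z : Z, |ℓ (A S, z) - ℓ (A S', z)| ≤ ξ) :
    (∫ S, ((∫ z, ℓ (A S, z) ∂D) - (1 / (n : ℝ)) * ∑ i, ℓ (A S, S i))
        ∂(Measure.pi fun _ : Fin n => D)) ≤ ξ := by
  set π := Measure.pi fun _ : Fin n => D
  have hfresh : Integrable (fun p : (Fin n → Z) × Z => ℓ (A p.1, p.2)) (π.prod D) :=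
    .of_bound (Measurable.aestronglyMeasurable (by fun_prop)) B (.of_forall fun _ => hbdd _)
  have hreplaced (i : Fin n) : Integrable
      (fun p : (Fin n → Z) × Z => ℓ (A (Function.update p.1 i p.2), p.2)) (π.prod D) :=
    .of_bound (Measurable.aestronglyMeasurable (by fun_prop)) B (.of_forall fun _ => hbdd _)
  have hinsample (i : Fin n) : Integrable (fun S => ℓ (A S, S i)) π :=
    .of_bound (Measurable.aestronglyMeasurable (by fun_prop)) B (.of_forall fun _ => hbdd _)
  have hswap (i : Fin n) : ∫ S, ℓ (A S, S i) ∂π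
      = ∫ p, ℓ (A (Function.update p.1 i p.2), p.2) ∂π.prod D :=
    integral_eval_eq_integral_update (fun _ => D) i (fun S z => ℓ (A S, z))
      (hinsample i).aestronglyMeasurable
  have hpointwise (p : (Fin n → Z) × Z) :
      ℓ (A p.1, p.2) - (1 / (n : ℝ)) * ∑ i, ℓ (A (Function.update p.1 i p.2), p.2) ≤ ξ := by
    have : Nonempty (Fin n) := ⟨⟨0, hn⟩⟩
    simpa using sub_mul_sum_le_of_forall_sub_le fun i => (abs_le.1 <| hstable _ _
      ⟨i, fun j hj => (Function.update_of_ne hj _ _).symm⟩ p.2).2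
  have hreplacedAvg := (integrable_finsetSum Finset.univ fun i _ => hreplaced i).const_mul (1 / n : ℝ)
  calc _ = ∫ p, ℓ (A p.1, p.2) - (1 / (n : ℝ)) * ∑ i, ℓ (A (Function.update p.1 i p.2), p.2)
          ∂π.prod D := by
        rw [integral_sub hfresh.integral_prod_left
            ((integrable_finsetSum _ fun i _ => hinsample i).const_mul _),
          integral_sub hfresh hreplacedAvg, integral_prod _ hfresh, integral_const_mul,
          integral_const_mul, integral_finsetSum _ fun i _ => hinsample i,
          integral_finsetSum _ fun i _ => hreplaced i]
        simp only [hswap]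
    _ ≤ ∫ _, ξ ∂π.prod D := integral_mono (hfresh.sub hreplacedAvg) (integrable_const ξ) hpointwise
    _ = ξ := by simp
end
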